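/- arXiv:2410.01352 — 2 statements merged into one kernel-verified Lean document; each statement's English description precedes it below -/
import Mathlib

section
/- Let $A_{11}:[0,T]\to\mathbb M_d$ solve the matrix Riccati ODE $\dot A_{11}(t) = -\gamma A_{11}(t)\Sigma\Sigma^\top A_{11}(t) + 2K A_{11}(t)$ with terminal condition $A_{11}(T) = A^F_{11}$ negative semidefinite, where $\gamma, K > 0$. Then the solution exists uniquely on all of $[0,T]$ and $A_{11}(t)$ is negative semidefinite for every $t\in[0,T]$; consequently, for any positive definite covariance matrix $V$, the matrix $V^{-1} - \gamma A_{11}(0)$ is positive definite. -/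
open Matrix

attribute [local instance] Matrix.normedAddCommGroup Matrix.normedSpace

/-!
Simultaneously diagonalize the data: write `-A^F = L Lᵀ` with `Lᵀ ΣΣᵀ L = diag(D)`, `D ≥ 0`.
The ansatz `A(t) = L diag(φᵢ(t)) Lᵀ` then reduces the matrix Riccati equation to the scalar
Bernoulli equations `φᵢ' = 2K φᵢ - γ Dᵢ φᵢ²`, `φᵢ(T) = -1`, whose explicit solutions
`φᵢ(t) = -e^{2K(t-T)} / (1 + γ Dᵢ (1 - e^{2K(t-T)}) / (2K))` stay negative for `t ≤ T`.
Uniqueness holds because the vector field is polynomial, hence Lipschitz on the compact set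
swept out by any two solutions.
-/

open Real

open Set in
theorem eqOn_Icc_of_hasDerivAt_of_locallyLipschitz {E : Type*} [NormedAddCommGroup E]
    [NormedSpace ℝ E] {v : E → E} (hv : LocallyLipschitz v) {f g : ℝ → E} {a b : ℝ}
    (hf : ∀ t ∈ Icc a b, HasDerivAt f (v (f t)) t)
    (hg : ∀ t ∈ Icc a b, HasDerivAt g (v (g t)) t) (hb : f b = g b) :
    EqOn f g (Icc a b) := by
  have hfc : ContinuousOn f (Icc a b) := fun t ht => (hf t ht).continuousAt.continuousWithinAt
  have hgc : ContinuousOn g (Icc a b) := fun t ht => (hg t ht).continuousAt.continuousWithinAt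
  set s := f '' Icc a b ∪ g '' Icc a b
  have hs : IsCompact s := (isCompact_Icc.image_of_continuousOn hfc).union
    (isCompact_Icc.image_of_continuousOn hgc)
  obtain ⟨K, hK⟩ := hv.locallyLipschitzOn.exists_lipschitzOnWith_of_compact hs
  exact ODE_solution_unique_of_mem_Icc_left (v := fun _ => v) (s := fun _ => s)
    (fun _ _ => hK) hfc (fun t ht => (hf t (Ioc_subset_Icc_self ht)).hasDerivWithinAt)
    (fun t ht => Or.inl ⟨t, Ioc_subset_Icc_self ht, rfl⟩) hgc
    (fun t ht => (hg t (Ioc_subset_Icc_self ht)).hasDerivWithinAt)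
    (fun t ht => Or.inr ⟨t, Ioc_subset_Icc_self ht, rfl⟩) hb

noncomputable def scalarRiccatiSol (γ K T c s : ℝ) : ℝ :=
  -exp (2 * K * (s - T)) / (1 + γ / (2 * K) * (1 - exp (2 * K * (s - T))) * c)

section ScalarRiccati

variable {γ K T c s : ℝ}

lemma scalarRiccatiSol_denom_pos (hγ : 0 ≤ γ) (hK : 0 < K) (hc : 0 ≤ c) (hs : s ≤ T) :
    0 < 1 + γ / (2 * K) * (1 - exp (2 * K * (s - T))) * c := by
  have he : exp (2 * K * (s - T)) ≤ 1 := exp_le_one_iff.2 (by nlinarith)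
  have : 0 ≤ γ / (2 * K) * (1 - exp (2 * K * (s - T))) * c :=
    mul_nonneg (mul_nonneg (div_nonneg hγ (by positivity)) (by linarith)) hc
  linarith

lemma scalarRiccatiSol_self (γ K T c : ℝ) : scalarRiccatiSol γ K T c T = -1 := by
  simp [scalarRiccatiSol]

lemma scalarRiccatiSol_neg (hγ : 0 ≤ γ) (hK : 0 < K) (hc : 0 ≤ c) (hs : s ≤ T) :
    scalarRiccatiSol γ K T c s < 0 :=
  div_neg_of_neg_of_pos (neg_neg_of_pos (exp_pos _)) (scalarRiccatiSol_denom_pos hγ hK hc hs)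

lemma hasDerivAt_scalarRiccatiSol (hγ : 0 ≤ γ) (hK : 0 < K) (hc : 0 ≤ c) (hs : s ≤ T) :
    HasDerivAt (scalarRiccatiSol γ K T c)
      (2 * K * scalarRiccatiSol γ K T c s - γ * c * scalarRiccatiSol γ K T c s ^ 2) s := by
  have he := (((hasDerivAt_id' s).sub_const T).const_mul (2 * K)).exp
  have hden := (((he.const_sub 1).const_mul (γ / (2 * K))).mul_const c).const_add 1
  refine (he.fun_neg.div hden (scalarRiccatiSol_denom_pos hγ hK hc hs).ne').congr_deriv ?_
  have hK' : K ≠ 0 := hK.ne'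
  simp only [scalarRiccatiSol]
  field_simp

end ScalarRiccati

section Conjugation

variable {m n p : Type*} [Fintype n] [DecidableEq n]

def Matrix.mulDiagonalMul (L : Matrix m n ℝ) (R : Matrix n p ℝ) :
    (n → ℝ) →ₗ[ℝ] Matrix m p ℝ where
  toFun v := L * diagonal v * R
  map_add' v w := by rw [← Matrix.add_mul, ← Matrix.mul_add, diagonal_add]; rfl
  map_smul' a v := by simp

lemma Matrix.mulDiagonalMul_apply (L : Matrix m n ℝ) (R : Matrix n p ℝ) (v : n → ℝ) :
    mulDiagonalMul L R v = L * diagonal v * R := rfl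

lemma Matrix.mulDiagonalMul_mul_mul_mulDiagonalMul [Fintype m] {L : Matrix m n ℝ}
    {S : Matrix m m ℝ} {D : n → ℝ} (hL : Lᴴ * S * L = diagonal D) (v w : n → ℝ) :
    mulDiagonalMul L Lᴴ v * S * mulDiagonalMul L Lᴴ w = mulDiagonalMul L Lᴴ (v * D * w) := by
  simp only [mulDiagonalMul_apply]
  calc L * diagonal v * Lᴴ * S * (L * diagonal w * Lᴴ)
      = L * (diagonal v * (Lᴴ * S * L) * diagonal w) * Lᴴ := by simp only [Matrix.mul_assoc]
    _ = L * diagonal (v * D * w) * Lᴴ := by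
      rw [hL, diagonal_mul_diagonal, diagonal_mul_diagonal]; rfl

lemma Matrix.hasDerivAt_mulDiagonalMul [Fintype m] [Fintype p] (L : Matrix m n ℝ)
    (R : Matrix n p ℝ) {ψ : ℝ → n → ℝ} {ψ' : n → ℝ} {t : ℝ} (hψ : HasDerivAt ψ ψ' t) :
    HasDerivAt (fun s => mulDiagonalMul L R (ψ s)) (mulDiagonalMul L R ψ') t :=
  (mulDiagonalMul L R).toContinuousLinearMap.hasFDerivAt.comp_hasDerivAt t hψ

end Conjugation

open scoped MatrixOrder ComplexOrder in
theorem Matrix.PosSemidef.exists_mul_conjTranspose_eq_and_diagonalizes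
    {𝕜 n : Type*} [RCLike 𝕜] [Fintype n] [DecidableEq n] {N S : Matrix n n 𝕜}
    (hN : N.PosSemidef) (hS : S.PosSemidef) :
    ∃ (L : Matrix n n 𝕜) (D : n → ℝ), (∀ i, 0 ≤ D i) ∧ L * Lᴴ = N ∧
      Lᴴ * S * L = diagonal (fun i => (D i : 𝕜)) := by
  set R := CFC.sqrt N
  have hR : Rᴴ = R := (CFC.sqrt_nonneg N).posSemidef.isHermitian
  have hM : (R * S * R).PosSemidef := by
    simpa only [hR] using hS.mul_mul_conjTranspose_same R
  set U : Matrix n n 𝕜 := (hM.1.eigenvectorUnitary : Matrix n n 𝕜)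
  have hUU : U * Uᴴ = 1 := by
    simpa [star_eq_conjTranspose] using Unitary.coe_mul_star_self hM.1.eigenvectorUnitary
  refine ⟨R * U, hM.1.eigenvalues, hM.eigenvalues_nonneg, ?_, ?_⟩
  · calc R * U * (R * U)ᴴ = R * (U * Uᴴ) * R := by
          simp only [conjTranspose_mul, hR, Matrix.mul_assoc]
      _ = N := by rw [hUU, Matrix.mul_one, CFC.sqrt_mul_sqrt_self N hN.nonneg]
  · calc (R * U)ᴴ * S * (R * U) = Uᴴ * (R * S * R) * U := by
          simp only [conjTranspose_mul, hR, Matrix.mul_assoc]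
      _ = _ := by
          have := hM.1.conjStarAlgAut_star_eigenvectorUnitary
          simpa [Unitary.conjStarAlgAut_star_apply, Function.comp_def, star_eq_conjTranspose]
            using this

section Riccati

variable {n : Type*} [Fintype n]

def riccatiField (γ K : ℝ) (S X : Matrix n n ℝ) : Matrix n n ℝ :=
  (-γ) • (X * S * X) + (2 * K) • X

lemma contDiff_riccatiField (γ K : ℝ) (S : Matrix n n ℝ) :
    ContDiff ℝ 1 (riccatiField γ K S) := by
  refine ContDiff.add (ContDiff.const_smul _ ?_) (contDiff_id.const_smul _)
  refine contDiff_pi.2 fun i => contDiff_pi.2 fun j => ?_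
  simp only [Matrix.mul_apply]
  fun_prop

variable [DecidableEq n]

noncomputable def riccatiSol (γ K T : ℝ) (L : Matrix n n ℝ) (D : n → ℝ) (s : ℝ) : Matrix n n ℝ :=
  mulDiagonalMul L Lᴴ (fun i => scalarRiccatiSol γ K T (D i) s)

variable {γ K T s : ℝ} {L : Matrix n n ℝ} {D : n → ℝ}

lemma riccatiSol_self : riccatiSol γ K T L D T = -(L * Lᴴ) := by
  simp [riccatiSol, mulDiagonalMul_apply, scalarRiccatiSol_self, ← diagonal_neg]

lemma posSemidef_neg_riccatiSol (hγ : 0 ≤ γ) (hK : 0 < K) (hD : ∀ i, 0 ≤ D i) (hs : s ≤ T) :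
    (-riccatiSol γ K T L D s).PosSemidef := by
  rw [riccatiSol, ← map_neg]
  exact (posSemidef_diagonal_iff.2 fun i =>
    neg_nonneg.2 (scalarRiccatiSol_neg hγ hK (hD i) hs).le).mul_mul_conjTranspose_same L

lemma hasDerivAt_riccatiSol {S : Matrix n n ℝ} (hγ : 0 ≤ γ) (hK : 0 < K) (hD : ∀ i, 0 ≤ D i)
    (hL : Lᴴ * S * L = diagonal D) (hs : s ≤ T) :
    HasDerivAt (riccatiSol γ K T L D) (riccatiField γ K S (riccatiSol γ K T L D s)) s := by
  have hφ := hasDerivAt_pi.2 fun i => hasDerivAt_scalarRiccatiSol hγ hK (hD i) hs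
  refine (hasDerivAt_mulDiagonalMul L Lᴴ hφ).congr_deriv ?_
  rw [riccatiField, riccatiSol, mulDiagonalMul_mul_mul_mulDiagonalMul hL, ← map_smul, ← map_smul,
    ← map_add]
  congr 1
  ext i
  simp only [Pi.add_apply, Pi.smul_apply, Pi.mul_apply, smul_eq_mul]
  ring

end Riccati

theorem stmt14_general {d : ℕ} (T γ K : ℝ) (hT : 0 < T) (hγ : 0 < γ) (hK : 0 < K)
    (Sig : Matrix (Fin d) (Fin d) ℝ) (AF : Matrix (Fin d) (Fin d) ℝ)
    (hAF : (-AF).PosSemidef) :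
    ∃ A : ℝ → Matrix (Fin d) (Fin d) ℝ,
      (∀ t ∈ Set.Icc (0:ℝ) T,
        HasDerivAt A ((-γ) • (A t * (Sig * Sigᵀ) * A t) + (2 * K) • A t) t) ∧
      A T = AF ∧
      (∀ B : ℝ → Matrix (Fin d) (Fin d) ℝ,
        (∀ t ∈ Set.Icc (0:ℝ) T,
          HasDerivAt B ((-γ) • (B t * (Sig * Sigᵀ) * B t) + (2 * K) • B t) t) →
        B T = AF → Set.EqOn A B (Set.Icc (0:ℝ) T)) ∧
      (∀ t ∈ Set.Icc (0:ℝ) T, (-(A t)).PosSemidef) ∧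
      (∀ V : Matrix (Fin d) (Fin d) ℝ, V.PosDef → (V⁻¹ - γ • A 0).PosDef) := by
  obtain ⟨L, D, hD, hLL, hLSL⟩ := hAF.exists_mul_conjTranspose_eq_and_diagonalizes
    (posSemidef_self_mul_conjTranspose Sig)
  rw [conjTranspose_eq_transpose_of_trivial Sig] at hLSL
  have hA : ∀ t ∈ Set.Icc (0:ℝ) T, HasDerivAt (riccatiSol γ K T L D)
      (riccatiField γ K (Sig * Sigᵀ) (riccatiSol γ K T L D t)) t :=
    fun t ht => hasDerivAt_riccatiSol hγ.le hK hD hLSL ht.2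
  have hAT : riccatiSol γ K T L D T = AF := by rw [riccatiSol_self, hLL, neg_neg]
  have hA_nonpos : ∀ t ≤ T, (-riccatiSol γ K T L D t).PosSemidef := fun t ht =>
    posSemidef_neg_riccatiSol hγ.le hK hD ht
  refine ⟨_, hA, hAT, fun B hB hBT => ?_, fun t ht => hA_nonpos t ht.2, fun V hV => ?_⟩
  · exact eqOn_Icc_of_hasDerivAt_of_locallyLipschitz
      (contDiff_riccatiField γ K _).locallyLipschitz hA hB (hAT.trans hBT.symm)
  · rw [sub_eq_add_neg, ← smul_neg]
    exact hV.inv.add_posSemidef ((hA_nonpos 0 hT.le).smul hγ.le)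

/-- the matrix Riccati ODE `Ȧ₁₁ = -γA₁₁ΣΣᵀA₁₁ + 2KA₁₁` with negative
semidefinite terminal condition `A₁₁(T) = A^F₁₁` has a unique global solution on `[0,T]`,
the solution is negative semidefinite everywhere, and consequently `V⁻¹ - γA₁₁(0)` is
positive definite for every positive definite covariance matrix `V`. -/
theorem stmt14 {d : ℕ} (T γ K : ℝ) (hT : 0 < T) (hγ : 0 < γ) (hK : 0 < K)
    (Sig : Matrix (Fin d) (Fin d) ℝ) (AF : Matrix (Fin d) (Fin d) ℝ)
    (hAFsymm : AF.IsSymm) (hAF : (-AF).PosSemidef) :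
    ∃ A : ℝ → Matrix (Fin d) (Fin d) ℝ,
      (∀ t ∈ Set.Icc (0:ℝ) T,
        HasDerivAt A ((-γ) • (A t * (Sig * Sigᵀ) * A t) + (2 * K) • A t) t) ∧
      A T = AF ∧
      (∀ B : ℝ → Matrix (Fin d) (Fin d) ℝ,
        (∀ t ∈ Set.Icc (0:ℝ) T,
          HasDerivAt B ((-γ) • (B t * (Sig * Sigᵀ) * B t) + (2 * K) • B t) t) →
        B T = AF → Set.EqOn A B (Set.Icc (0:ℝ) T)) ∧
      (∀ t ∈ Set.Icc (0:ℝ) T, (-(A t)).PosSemidef) ∧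
      (∀ V : Matrix (Fin d) (Fin d) ℝ, V.PosDef → (V⁻¹ - γ • A 0).PosDef) :=
  stmt14_general T γ K hT hγ hK Sig AF hAF
end

section
/- Let $A_{00}$ satisfy $\dot A_{00}(t) = -\gamma A_{00}(t)\Sigma_0\Sigma_0^\top A_{00}(t) - \gamma A_{10}(t)^\top\Sigma\Sigma^\top A_{10}(t) + 2K_0 A_{00}(t)$ and define $\alpha_t := \Sigma_0^\top\dot A_{00}(t)A_{00}(t)^{-1}(\Sigma_0^\top)^{-1} - K_0 I$, $\varrho_t := -\gamma\Sigma_0^\top A_{00}(t)\Sigma_0 - \zeta_t$, where $\zeta$ satisfies $\dot\zeta_t = -\zeta_t^2 + \alpha_t\zeta_t + \zeta_t\alpha_t^\top - \eta_t\eta_t^\top - \gamma^2\Sigma_0^\top A_{10}(t)^\top\Sigma\Sigma^\top A_{10}(t)\Sigma_0$. Then $\varrho$ satisfies the Kalman filter Riccati equation $\dot\varrho_t = \eta_t\eta_t^\top + \alpha_t\varrho_t + \varrho_t\alpha_t^\top - \zeta_t\varrho_t - \varrho_t\zeta_t - \varrho_t^2$. -/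
/-!
Write `P = Σ₀ᵀ A₀₀ Σ₀`, so that `ϱ = -γ P - ζ` and `ϱ̇ = -γ Σ₀ᵀ Ȧ₀₀ Σ₀ - ζ̇`. The definition of `α`
gives `α P = Σ₀ᵀ Ȧ₀₀ Σ₀ - K₀ P`, and since `A₀₀` and hence `Ȧ₀₀` are symmetric, transposing gives
the same value for `P αᵀ`. Conjugating the Riccati equation of `A₀₀` by `Σ₀` gives
`Σ₀ᵀ Ȧ₀₀ Σ₀ = -γ P² - γ Σ₀ᵀ A₁₀ᵀ Σ Σᵀ A₁₀ Σ₀ + 2 K₀ P`. Once `α P` and `P αᵀ` are replaced, the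
Kalman equation is an identity in any associative algebra.
-/

open Matrix

attribute [local instance] Matrix.normedAddCommGroup Matrix.normedSpace

theorem kalman_riccati_of_mul_eq {𝕜 R : Type*} [CommRing 𝕜] [Ring R] [Algebra 𝕜 R] (γ K : 𝕜)
    {P N B Z Z' E α β ρ : R} (hρ : ρ = -γ • P - Z)
    (hαP : α * P = B - K • P) (hPβ : P * β = B - K • P)
    (hB : B = -γ • (P * P) - γ • N + (2 * K) • P)
    (hZ' : Z' = -(Z * Z) + α * Z + Z * β - E - γ ^ 2 • N) :
    -γ • B - Z' = E + α * ρ + ρ * β - Z * ρ - ρ * Z - ρ * ρ := by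
  subst hρ hZ'
  simp only [mul_sub, sub_mul, mul_smul_comm, smul_mul_assoc, hαP, hPβ]
  rw [hB]
  module

theorem HasDerivAt.const_mul_mul_const {n : Type*} [Fintype n] [DecidableEq n]
    {f : ℝ → Matrix n n ℝ} {f' : Matrix n n ℝ} {t : ℝ} (hf : HasDerivAt f f' t)
    (L R : Matrix n n ℝ) : HasDerivAt (fun s => L * f s * R) (L * f' * R) t := by
  have h := ((LinearMap.mulLeft ℝ L).comp (LinearMap.mulRight ℝ R)).toContinuousLinearMap
    |>.hasFDerivAt.comp_hasDerivAt t hf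
  simp only [mul_assoc]
  exact h

namespace Matrix

theorem IsSymm.transpose_mul_mul_self {m n α : Type*} [Fintype m] [CommSemiring α]
    {M : Matrix m m α} (hM : M.IsSymm) (B : Matrix m n α) : (Bᵀ * M * B).IsSymm := by
  rw [IsSymm, transpose_mul, transpose_mul, transpose_transpose, hM.eq, Matrix.mul_assoc]

theorem conj_mul_inv_sub_smul_one_mul {n K : Type*} [Fintype n] [DecidableEq n] [CommRing K]
    {U A : Matrix n n K} (hU : IsUnit U) (hA : IsUnit A) (X V : Matrix n n K) (c : K) :
    (U * X * A⁻¹ * U⁻¹ - c • 1) * (U * A * V) = U * X * V - c • (U * A * V) := by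
  rw [isUnit_iff_isUnit_det] at hU hA
  simp only [sub_mul, smul_mul_assoc, one_mul, mul_assoc,
    nonsing_inv_mul_cancel_left _ _ hU, nonsing_inv_mul_cancel_left _ _ hA]

end Matrix

theorem stmt16_general {d₀ d k : ℕ} (γ K0 : ℝ) (t : ℝ)
    (Sig0 : Matrix (Fin d₀) (Fin d₀) ℝ) (Sig : Matrix (Fin d) (Fin d) ℝ)
    (hSig0 : IsUnit Sig0)
    (A00 A00' : ℝ → Matrix (Fin d₀) (Fin d₀) ℝ) (A10 : ℝ → Matrix (Fin d) (Fin d₀) ℝ)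
    (ze ze' : ℝ → Matrix (Fin d₀) (Fin d₀) ℝ) (eta : ℝ → Matrix (Fin d₀) (Fin k) ℝ)
    (hA00symm : ∀ s, (A00 s).IsSymm) (hA00inv : ∀ s, IsUnit (A00 s))
    (hA00deriv : HasDerivAt A00 (A00' t) t)
    (hA00ode : ∀ s, A00' s
      = (-γ) • (A00 s * (Sig0 * Sig0ᵀ) * A00 s) - γ • ((A10 s)ᵀ * (Sig * Sigᵀ) * A10 s)
        + (2 * K0) • A00 s)
    (hzederiv : HasDerivAt ze (ze' t) t)
    (al : ℝ → Matrix (Fin d₀) (Fin d₀) ℝ)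
    (hal : ∀ s, al s = Sig0ᵀ * A00' s * (A00 s)⁻¹ * (Sig0ᵀ)⁻¹ - K0 • 1)
    (hzeode : ze' t
      = -(ze t * ze t) + al t * ze t + ze t * (al t)ᵀ - eta t * (eta t)ᵀ
        - (γ ^ 2) • (Sig0ᵀ * (A10 t)ᵀ * (Sig * Sigᵀ) * A10 t * Sig0))
    (rho : ℝ → Matrix (Fin d₀) (Fin d₀) ℝ)
    (hrho : ∀ s, rho s = (-γ) • (Sig0ᵀ * A00 s * Sig0) - ze s) :
    HasDerivAt rho
      (eta t * (eta t)ᵀ + al t * rho t + rho t * (al t)ᵀ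
        - ze t * rho t - rho t * ze t - rho t * rho t) t := by
  set P := Sig0ᵀ * A00 t * Sig0 with hP
  have hderiv : HasDerivAt rho ((-γ) • (Sig0ᵀ * A00' t * Sig0) - ze' t) t := by
    rw [funext hrho]
    exact ((hA00deriv.const_mul_mul_const _ _).const_smul (-γ)).sub hzederiv
  have hA'symm : (A00' t).IsSymm := by
    have hquad : (A00 t * (Sig0 * Sig0ᵀ) * A00 t).IsSymm := by
      simpa only [(hA00symm t).eq] using
        (isSymm_mul_transpose_self Sig0).transpose_mul_mul_self (A00 t)
    rw [hA00ode]
    exact ((hquad.smul _).sub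
      (((isSymm_mul_transpose_self Sig).transpose_mul_mul_self _).smul _)).add
      ((hA00symm t).smul _)
  have hαP : al t * P = Sig0ᵀ * A00' t * Sig0 - K0 • P := by
    rw [hal]
    exact conj_mul_inv_sub_smul_one_mul (Sig0.isUnit_transpose.2 hSig0) (hA00inv t) _ _ _
  have hPα : P * (al t)ᵀ = Sig0ᵀ * A00' t * Sig0 - K0 • P := by
    have hPsymm : P.IsSymm := (hA00symm t).transpose_mul_mul_self Sig0
    rw [← hPsymm.eq, ← transpose_mul, hαP, transpose_sub, transpose_smul, hPsymm.eq,
      (hA'symm.transpose_mul_mul_self Sig0).eq]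
  have hB : Sig0ᵀ * A00' t * Sig0 = (-γ) • (P * P)
      - γ • (Sig0ᵀ * (A10 t)ᵀ * (Sig * Sigᵀ) * A10 t * Sig0) + (2 * K0) • P := by
    simp only [hP, hA00ode, Matrix.mul_add, Matrix.add_mul, Matrix.mul_sub, Matrix.sub_mul,
      Matrix.mul_smul, Matrix.smul_mul, Matrix.mul_assoc]
  exact kalman_riccati_of_mul_eq γ K0 (hrho t) hαP hPα hB hzeode ▸ hderiv

/-- with `α_t = Σ₀ᵀȦ₀₀(t)A₀₀(t)⁻¹(Σ₀ᵀ)⁻¹ - K₀I` and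
`ϱ_t = -γΣ₀ᵀA₀₀(t)Σ₀ - ζ_t`, where `A₀₀` satisfies its Riccati ODE and `ζ` satisfies
`ζ̇ = -ζ² + αζ + ζαᵀ - ηηᵀ - γ²Σ₀ᵀA₁₀ᵀΣΣᵀA₁₀Σ₀`, the function `ϱ` satisfies the Kalman
filter Riccati equation `ϱ̇ = ηηᵀ + αϱ + ϱαᵀ - ζϱ - ϱζ - ϱ²`. -/
theorem stmt16 {d₀ d k : ℕ} (γ K0 : ℝ) (hγ : 0 < γ) (hK0 : 0 < K0) (t : ℝ)
    (Sig0 : Matrix (Fin d₀) (Fin d₀) ℝ) (Sig : Matrix (Fin d) (Fin d) ℝ)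
    (hSig0 : IsUnit Sig0)
    (A00 A00' : ℝ → Matrix (Fin d₀) (Fin d₀) ℝ) (A10 : ℝ → Matrix (Fin d) (Fin d₀) ℝ)
    (ze ze' : ℝ → Matrix (Fin d₀) (Fin d₀) ℝ) (eta : ℝ → Matrix (Fin d₀) (Fin k) ℝ)
    (hA00symm : ∀ s, (A00 s).IsSymm) (hA00inv : ∀ s, IsUnit (A00 s))
    (hzesymm : ∀ s, (ze s).IsSymm)
    (hA00deriv : HasDerivAt A00 (A00' t) t)
    (hA00ode : ∀ s, A00' s
      = (-γ) • (A00 s * (Sig0 * Sig0ᵀ) * A00 s) - γ • ((A10 s)ᵀ * (Sig * Sigᵀ) * A10 s)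
        + (2 * K0) • A00 s)
    (hzederiv : HasDerivAt ze (ze' t) t)
    (al : ℝ → Matrix (Fin d₀) (Fin d₀) ℝ)
    (hal : ∀ s, al s = Sig0ᵀ * A00' s * (A00 s)⁻¹ * (Sig0ᵀ)⁻¹ - K0 • 1)
    (hzeode : ze' t
      = -(ze t * ze t) + al t * ze t + ze t * (al t)ᵀ - eta t * (eta t)ᵀ
        - (γ ^ 2) • (Sig0ᵀ * (A10 t)ᵀ * (Sig * Sigᵀ) * A10 t * Sig0))
    (rho : ℝ → Matrix (Fin d₀) (Fin d₀) ℝ)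
    (hrho : ∀ s, rho s = (-γ) • (Sig0ᵀ * A00 s * Sig0) - ze s) :
    HasDerivAt rho
      (eta t * (eta t)ᵀ + al t * rho t + rho t * (al t)ᵀ
        - ze t * rho t - rho t * ze t - rho t * rho t) t :=
  stmt16_general γ K0 t Sig0 Sig hSig0 A00 A00' A10 ze ze' eta hA00symm hA00inv hA00deriv hA00ode
    hzederiv al hal hzeode rho hrho
end
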